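/- Suppose each f_m^j is μ-strongly convex and L-smooth, and γ ≤ 1/L. Then along Algorithm RR-CLI with η = γN, the local iterates and the star sequence satisfy the one-step contraction E[‖x_{m,t}^{r,j+1} − x_{m,⋆}^{r,j+1}‖²] ≤ (1 − γμ) E[‖x_{m,t}^{r,j} − x_{m,⋆}^{r,j}‖²] + 2γ³ σ²_{m,DS}, where σ²_{m,DS} = (1/γ²) E[ D_{f_m^{π_j}}(x_{m,⋆}^{r,j}, x_⋆) ]. -/

import Mathlib

open Finset RealInnerProductSpace

noncomputable section

/-- Points in `ℝ^d`. -/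
abbrev Vec (d : ℕ) := EuclideanSpace ℝ (Fin d)

/-- Randomness of one meta epoch: a permutation of the `M` clients (determining the `R`
cohorts of size `C` by client reshuffling) and, for each client, a permutation of its `N`
local data points. -/
abbrev DSOmega (M N : ℕ) := Equiv.Perm (Fin M) × (Fin M → Equiv.Perm (Fin N))

/-- Expectation: the uniform average over a finite sample space. -/
def Eavg {Ω : Type*} [Fintype Ω] (X : Ω → ℝ) : ℝ :=
  (Fintype.card Ω : ℝ)⁻¹ * ∑ ω, X ω

/-- The Bregman divergence `D_h(x, y) = h(x) − h(y) − ⟨∇h(y), x − y⟩`. -/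
def breg {d : ℕ} (h : Vec d → ℝ) (x y : Vec d) : ℝ :=
  h x - h y - ⟪gradient h y, x - y⟫

/-- The index (in `[M]`) of the `c`-th slot of cohort `r`, when the `M = C·R` clients are
partitioned into `R` cohorts of size `C`. -/
def cohortIdx {M C R : ℕ} (hM : M = C * R) (r : Fin R) (c : Fin C) : Fin M :=
  ⟨(r : ℕ) * C + (c : ℕ), by
    have h1 : (r : ℕ) * C + (c : ℕ) < ((r : ℕ) + 1) * C := by
      calc (r : ℕ) * C + (c : ℕ) < (r : ℕ) * C + C := Nat.add_lt_add_left c.isLt _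
        _ = ((r : ℕ) + 1) * C := by ring
    have h2 : ((r : ℕ) + 1) * C ≤ R * C := Nat.mul_le_mul (Nat.succ_le_of_lt r.isLt) (Nat.le_refl C)
    have h3 : R * C = M := by rw [hM, Nat.mul_comm]
    exact h1.trans_le (h2.trans_eq h3)⟩

/-- The global objective `f = (1/(MN)) Σ_m Σ_j f_m^j`. -/
def fbar {d M N : ℕ} (f : Fin M → Fin N → Vec d → ℝ) : Vec d → ℝ :=
  fun x => ((M : ℝ) * (N : ℝ))⁻¹ * ∑ m, ∑ j, f m j x

lemma hasDerivAt_comp_line {d : ℕ} (f : Vec d → ℝ) (hf : Differentiable ℝ f)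
    (x v : Vec d) (t : ℝ) :
    HasDerivAt (fun s : ℝ => f (x + s • v)) ⟪gradient f (x + t • v), v⟫ t := by
  have h1 : HasDerivAt (fun s : ℝ => x + s • v) v t := by
    simpa using ((hasDerivAt_id t).smul_const v).const_add x
  have h2 : HasFDerivAt f (InnerProductSpace.toDual ℝ (Vec d) (gradient f (x + t • v)))
      (x + t • v) := hasGradientAt_iff_hasFDerivAt.mp (hf _).hasGradientAt
  have h3 := h2.comp_hasDerivAt t h1
  rw [InnerProductSpace.toDual_apply_apply] at h3
  exact h3

lemma descent {d : ℕ} (f : Vec d → ℝ) (L : ℝ) (hL : 0 < L)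
    (hf : Differentiable ℝ f)
    (hs : ∀ x y, ‖gradient f x - gradient f y‖ ≤ L * ‖x - y‖)
    (x v : Vec d) :
    f (x + v) ≤ f x + ⟪gradient f x, v⟫ + L / 2 * ‖v‖ ^ 2 := by
  set φ : ℝ → ℝ := fun t => f (x + t • v) - t * ⟪gradient f x, v⟫ - L / 2 * t ^ 2 * ‖v‖ ^ 2
    with hφdef
  have hder : ∀ t, HasDerivAt φ
      (⟪gradient f (x + t • v), v⟫ - ⟪gradient f x, v⟫ - L * t * ‖v‖ ^ 2) t := by
    intro t
    have h1 := hasDerivAt_comp_line f hf x v t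
    have h2 : HasDerivAt (fun s : ℝ => s * ⟪gradient f x, v⟫) ⟪gradient f x, v⟫ t := by
      simpa using (hasDerivAt_id t).mul_const (⟪gradient f x, v⟫)
    have h3 : HasDerivAt (fun s : ℝ => L / 2 * s ^ 2 * ‖v‖ ^ 2) (L * t * ‖v‖ ^ 2) t := by
      have := ((hasDerivAt_pow 2 t).const_mul (L / 2)).mul_const (‖v‖ ^ 2)
      convert this using 1
      · rfl
      · rfl
      ring
    exact (h1.sub h2).sub h3
  have hanti : AntitoneOn φ (Set.Icc (0:ℝ) 1) := by
    apply antitoneOn_of_deriv_nonpos (convex_Icc 0 1)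
    · exact fun t _ => (hder t).continuousAt.continuousWithinAt
    · exact fun t _ => (hder t).differentiableAt.differentiableWithinAt
    · intro t ht
      rw [interior_Icc] at ht
      rw [(hder t).deriv]
      have hcs : ⟪gradient f (x + t • v) - gradient f x, v⟫ ≤ L * t * ‖v‖ ^ 2 := by
        calc ⟪gradient f (x + t • v) - gradient f x, v⟫
            ≤ ‖gradient f (x + t • v) - gradient f x‖ * ‖v‖ := real_inner_le_norm _ _
          _ ≤ (L * ‖x + t • v - x‖) * ‖v‖ := by
              have := hs (x + t • v) x
              have h0 : (0:ℝ) ≤ ‖v‖ := norm_nonneg _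
              exact mul_le_mul_of_nonneg_right this h0
          _ = L * t * ‖v‖ ^ 2 := by
              rw [add_sub_cancel_left, norm_smul, Real.norm_eq_abs, abs_of_pos ht.1]
              ring
      have heq : ⟪gradient f (x + t • v), v⟫ - ⟪gradient f x, v⟫
          = ⟪gradient f (x + t • v) - gradient f x, v⟫ := (inner_sub_left _ _ _).symm
      linarith
  have h01 := hanti (Set.left_mem_Icc.mpr zero_le_one)
    (Set.right_mem_Icc.mpr zero_le_one) zero_le_one
  simp only [hφdef, one_smul, zero_smul, add_zero, one_pow, one_mul, zero_pow,
    mul_zero, zero_mul, sub_zero] at h01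
  linarith

lemma coco {d : ℕ} (f : Vec d → ℝ) (μ L : ℝ) (hμ : 0 < μ) (hL : 0 < L)
    (hf : Differentiable ℝ f)
    (hsc : ∀ x y, ⟪gradient f x, y - x⟫ ≤ -(f x - f y + μ / 2 * ‖x - y‖ ^ 2))
    (hs : ∀ x y, ‖gradient f x - gradient f y‖ ≤ L * ‖x - y‖)
    (x xs : Vec d) :
    ‖gradient f x - gradient f xs‖ ^ 2 ≤ 2 * L * breg f x xs := by
  set g := gradient f x - gradient f xs with hg
  have hdesc := descent f L hL hf hs x (-(L⁻¹ • g))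
  have hconv := hsc xs (x + -(L⁻¹ • g))
  have hz : x + -(L⁻¹ • g) - xs = x - xs - L⁻¹ • g := by
    module
  have e1 : ⟪gradient f xs, x + -(L⁻¹ • g) - xs⟫
      = ⟪gradient f xs, x - xs⟫ - L⁻¹ * ⟪gradient f xs, g⟫ := by
    rw [hz, inner_sub_right, real_inner_smul_right]
  have e2 : ⟪gradient f x, -(L⁻¹ • g)⟫ = -(L⁻¹ * ⟪gradient f x, g⟫) := by
    rw [inner_neg_right, real_inner_smul_right]
  have e3 : ‖-(L⁻¹ • g)‖ ^ 2 = L⁻¹ ^ 2 * ‖g‖ ^ 2 := by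
    rw [norm_neg, norm_smul, Real.norm_eq_abs, abs_of_pos (inv_pos.mpr hL)]
    ring
  have e4 : ⟪gradient f x, g⟫ - ⟪gradient f xs, g⟫ = ‖g‖ ^ 2 := by
    rw [← inner_sub_left, ← hg, real_inner_self_eq_norm_sq]
  rw [e1] at hconv
  rw [e2, e3] at hdesc
  have hnn : (0:ℝ) ≤ μ / 2 * ‖xs - (x + -(L⁻¹ • g))‖ ^ 2 :=
    mul_nonneg (by positivity) (sq_nonneg _)
  have key : L⁻¹ * ‖g‖ ^ 2 / 2 ≤ f x - f xs - ⟪gradient f xs, x - xs⟫ := by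
    have e5 : L / 2 * (L⁻¹ ^ 2 * ‖g‖ ^ 2) = L⁻¹ * ‖g‖ ^ 2 / 2 := by
      field_simp
    have e6 : L⁻¹ * ⟪gradient f x, g⟫ - L⁻¹ * ⟪gradient f xs, g⟫ = L⁻¹ * ‖g‖ ^ 2 := by
      rw [← mul_sub, e4]
    linarith [hdesc, hconv, hnn, e5, e6]
  unfold breg
  have h2L : (0:ℝ) ≤ 2 * L := by positivity
  calc ‖g‖ ^ 2 = 2 * L * (L⁻¹ * ‖g‖ ^ 2 / 2) := by
        field_simp
        try ring
      _ ≤ 2 * L * (f x - f xs - ⟪gradient f xs, x - xs⟫) :=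
        mul_le_mul_of_nonneg_left key h2L

lemma pointwise {d : ℕ} (f : Vec d → ℝ) (μ L γ : ℝ) (hμ : 0 < μ) (hL : 0 < L)
    (hγ0 : 0 < γ) (hγ : γ ≤ 1 / L)
    (hf : Differentiable ℝ f)
    (hsc : ∀ x y, ⟪gradient f x, y - x⟫ ≤ -(f x - f y + μ / 2 * ‖x - y‖ ^ 2))
    (hs : ∀ x y, ‖gradient f x - gradient f y‖ ≤ L * ‖x - y‖)
    (x y xs : Vec d) :
    ‖x - γ • gradient f x - (y - γ • gradient f xs)‖ ^ 2
      ≤ (1 - γ * μ) * ‖x - y‖ ^ 2 + 2 * γ * breg f y xs := by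
  set u := gradient f x - gradient f xs with hu
  have hrw : x - γ • gradient f x - (y - γ • gradient f xs) = (x - y) - γ • u := by
    rw [hu]; module
  rw [hrw, norm_sub_sq_real, norm_smul, Real.norm_eq_abs, abs_of_pos hγ0,
    real_inner_smul_right]
  have hA : f x - f y + μ / 2 * ‖x - y‖ ^ 2 ≤ ⟪gradient f x, x - y⟫ := by
    have := hsc x y
    have h2 : ⟪gradient f x, x - y⟫ = -⟪gradient f x, y - x⟫ := by
      rw [← inner_neg_right]; congr 1; module
    linarith [this, h2.ge, h2.le]
  have hB : ⟪gradient f xs, x - y⟫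
      = (f x - f xs - breg f x xs) - (f y - f xs - breg f y xs) := by
    unfold breg
    have : (x : Vec d) - y = (x - xs) - (y - xs) := by module
    rw [this, inner_sub_right]
    ring
  have hC : ‖u‖ ^ 2 ≤ 2 * L * breg f x xs := coco f μ L hμ hL hf hsc hs x xs
  have hD : 0 ≤ breg f x xs := by
    have := hsc xs x
    unfold breg
    nlinarith [sq_nonneg ‖xs - x‖]
  have hγL : γ * L ≤ 1 := by
    rw [div_eq_mul_inv, one_mul] at hγ
    calc γ * L ≤ L⁻¹ * L := mul_le_mul_of_nonneg_right hγ hL.le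
      _ = 1 := inv_mul_cancel₀ hL.ne'
  have hiu : ⟪u, x - y⟫ = ⟪gradient f x, x - y⟫ - ⟪gradient f xs, x - y⟫ := by
    rw [hu, inner_sub_left]
  have h5 : γ ^ 2 * ‖u‖ ^ 2 ≤ γ ^ 2 * (2 * L * breg f x xs) :=
    mul_le_mul_of_nonneg_left hC (sq_nonneg γ)
  have h6 : γ ^ 2 * (2 * L * breg f x xs) ≤ γ * (2 * breg f x xs) := by
    have : γ ^ 2 * (2 * L * breg f x xs) = (γ * L) * (2 * γ * breg f x xs) := by ring
    rw [this]
    have hnn : 0 ≤ 2 * γ * breg f x xs := by positivity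
    nlinarith
  have hinner : μ / 2 * ‖x - y‖ ^ 2 + breg f x xs - breg f y xs ≤ ⟪u, x - y⟫ := by
    rw [hiu, hB]; linarith [hA]
  have h7 : 2 * γ * (μ / 2 * ‖x - y‖ ^ 2 + breg f x xs - breg f y xs)
      ≤ 2 * γ * ⟪u, x - y⟫ :=
    mul_le_mul_of_nonneg_left hinner (by linarith)
  have hcomm : ⟪x - y, u⟫ = ⟪u, x - y⟫ := real_inner_comm _ _
  nlinarith [h5, h6, h7, hcomm.le, hcomm.ge]

/-- One-step contraction for `RR-CLI` (with `η = γN`, so that the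
server iterate is the cohort average of the local models): if each `f_m^j` is
`μ`-strongly convex and `L`-smooth and `γ ≤ 1/L`, then for all `m`, `r < R`, `j < N`,
`E[‖x_{m,t}^{r,j+1} − x_{m,⋆}^{r,j+1}‖²]
  ≤ (1 − γμ) E[‖x_{m,t}^{r,j} − x_{m,⋆}^{r,j}‖²] + 2γ³ σ²_{m,DS}`,
where `σ²_{m,DS} = γ⁻² E[D_{f_m^{π_j}}(x_{m,⋆}^{r,j}, x_⋆)]`. -/
theorem statement11 (d M N C R : ℕ) (hM : M = C * R) (hC : 0 < C) (hN : 0 < N)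
    (μ L : ℝ) (hμ : 0 < μ) (hL : 0 < L)
    (f : Fin M → Fin N → Vec d → ℝ)
    (hdiff : ∀ m j, Differentiable ℝ (f m j))
    (hsc : ∀ m j x y,
      ⟪gradient (f m j) x, y - x⟫ ≤ -(f m j x - f m j y + μ / 2 * ‖x - y‖ ^ 2))
    (hsmooth : ∀ m j x y, ‖gradient (f m j) x - gradient (f m j) y‖ ≤ L * ‖x - y‖)
    (γ : ℝ) (hγ0 : 0 < γ) (hγ : γ ≤ 1 / L)
    (xs x0 : Vec d) (hmin : ∀ x, fbar f xs ≤ fbar f x)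
    -- the algorithm iterates of one meta epoch, started at `x0`
    (Xr : DSOmega M N → ℕ → Vec d)
    (Xl : DSOmega M N → ℕ → Fin M → ℕ → Vec d)
    (hX0 : ∀ ω, Xr ω 0 = x0)
    (hlinit : ∀ ω r m, Xl ω r m 0 = Xr ω r)
    (hlstep : ∀ ω r m (j : ℕ) (hj : j < N),
      Xl ω r m (j + 1) =
        Xl ω r m j - γ • gradient (f m (ω.2 m ⟨j, hj⟩)) (Xl ω r m j))
    (hrstep : ∀ ω (r : ℕ) (hr : r < R),
      Xr ω (r + 1) =
        (C : ℝ)⁻¹ • ∑ c : Fin C, Xl ω r (ω.1 (cohortIdx hM ⟨r, hr⟩ c)) N)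
    -- the star sequence, driven by the same permutations
    (Ys : DSOmega M N → ℕ → Vec d)
    (Yl : DSOmega M N → ℕ → Fin M → ℕ → Vec d)
    (hYs0 : ∀ ω, Ys ω 0 = xs)
    (hYlinit : ∀ ω r m, Yl ω r m 0 = Ys ω r)
    (hYlstep : ∀ ω r m (j : ℕ) (hj : j < N),
      Yl ω r m (j + 1) = Yl ω r m j - γ • gradient (f m (ω.2 m ⟨j, hj⟩)) xs)
    (hYsstep : ∀ ω (r : ℕ) (hr : r < R),
      Ys ω (r + 1) =
        (C : ℝ)⁻¹ • ∑ c : Fin C, Yl ω r (ω.1 (cohortIdx hM ⟨r, hr⟩ c)) N) :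
    ∀ (m : Fin M) (r : ℕ), r < R → ∀ (j : ℕ) (hj : j < N),
      Eavg (fun ω : DSOmega M N => ‖Xl ω r m (j + 1) - Yl ω r m (j + 1)‖ ^ 2)
        ≤ (1 - γ * μ) *
            Eavg (fun ω : DSOmega M N => ‖Xl ω r m j - Yl ω r m j‖ ^ 2)
          + 2 * γ ^ 3 *
            ((γ ^ 2)⁻¹ *
              Eavg (fun ω : DSOmega M N =>
                breg (f m (ω.2 m ⟨j, hj⟩)) (Yl ω r m j) xs)) := by
  intro m r hr j hj
  have key : ∀ ω : DSOmega M N,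
      ‖Xl ω r m (j + 1) - Yl ω r m (j + 1)‖ ^ 2
        ≤ (1 - γ * μ) * ‖Xl ω r m j - Yl ω r m j‖ ^ 2
          + 2 * γ * breg (f m (ω.2 m ⟨j, hj⟩)) (Yl ω r m j) xs := by
    intro ω
    rw [hlstep ω r m j hj, hYlstep ω r m j hj]
    exact pointwise (f m (ω.2 m ⟨j, hj⟩)) μ L γ hμ hL hγ0 hγ (hdiff m _)
      (hsc m _) (hsmooth m _) (Xl ω r m j) (Yl ω r m j) xs
  have hmono : Eavg (fun ω : DSOmega M N => ‖Xl ω r m (j + 1) - Yl ω r m (j + 1)‖ ^ 2)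
      ≤ Eavg (fun ω : DSOmega M N => (1 - γ * μ) * ‖Xl ω r m j - Yl ω r m j‖ ^ 2
          + 2 * γ * breg (f m (ω.2 m ⟨j, hj⟩)) (Yl ω r m j) xs) := by
    unfold Eavg
    refine mul_le_mul_of_nonneg_left ?_ (inv_nonneg.mpr (Nat.cast_nonneg _))
    exact Finset.sum_le_sum fun ω _ => key ω
  refine hmono.trans_eq ?_
  unfold Eavg
  rw [Finset.sum_add_distrib, ← Finset.mul_sum, ← Finset.mul_sum]
  have hγne : γ ≠ 0 := hγ0.ne'
  field_simp


end
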